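/- Let μ_1, μ_0 be the conditional distributions of X given S=1 and S=0, with m_s := ∫ η(·,s) dμ_s > 0 for s ∈ {0,1}. Let η̂ : ℝ^d × {0,1} → [0,1] be measurable with m̂_s := ∫ η̂(·,s) dμ_s > 0 and μ_s({x : η̂(x,s) = t}) = 0 for every t ∈ (0,1], and let ν_1, ν_0 be probability measures on ℝ^d with ∫ η̂(·,s) dν_s > 0. Let p̂_1, p̂_0 > 0, and for θ ∈ ℝ define ĝ_θ(x,1) := 1{1 ≤ η̂(x,1)·(2 − θ/p̂_1)}, ĝ_θ(x,0) := 1{1 ≤ η̂(x,0)·(2 + θ/p̂_0)}, and Δ̂(ĝ_θ) := |∫ η̂(·,1)ĝ_θ(·,1) dν_1 / ∫ η̂(·,1) dν_1 − ∫ η̂(·,0)ĝ_θ(·,0) dν_0 / ∫ η̂(·,0) dν_0|. If θ̂ ∈ ℝ minimizes θ ↦ Δ̂(ĝ_θ) over ℝ, then the true unfairness satisfies |ℙ(ĝ_{θ̂}(X,S)=1 | S=1,Y=1) − ℙ(ĝ_{θ̂}(X,S)=1 | S=0,Y=1)| ≤ 2·Σ_{s∈{0,1}} ∫ |η(·,s)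 − η̂(·,s)| dμ_s / m_s + 4·Σ_{s∈{0,1}} sup_{t∈[0,1]} |∫ η̂(·,s)·1{t ≤ η̂(·,s)} dμ_s − ∫ η̂(·,s)·1{t ≤ η̂(·,s)} dν_s| / m̂_s. -/

import Mathlib

/-!
Write `a_s = ∫ η g / ∫ η` (over `μ_s`) for the true acceptance rates of `ĝ_θ̂`. Replacing `η` by
`η̂` in `a_s` costs `2 ∫ |η - η̂| / m_s`. The `η̂`-weighted mass accepted by the threshold rule
`1 ≤ η̂ c` is the tail mass `∫ η̂ 1{c⁻¹ ≤ η̂}`, so replacing `μ_s` by `ν_s` costs at most twice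
the uniform tail gap divided by `m̂_s`. Since `μ_s` gives no mass to the level sets of `η̂`, the
accepted masses are continuous in `θ`, and the intermediate value theorem gives a `θ*` at which
the two `μ`-side ratios agree. The empirical unfairness at `θ*`, which bounds that at the
minimizer `θ̂`, is then at most the same two tail-gap errors; together with the errors at `θ̂`
this gives the factor 4.
-/

open MeasureTheory ProbabilityTheory Set Filter

theorem abs_le_one_of_mem_Icc {x : ℝ} (hx : x ∈ Icc (0 : ℝ) 1) : |x| ≤ 1 :=
  abs_le.2 ⟨by linarith [hx.1], hx.2⟩

theorem ite_one_zero_mem_Icc (P : Prop) [Decidable P] : (if P then (1 : ℝ) else 0) ∈ Icc 0 1 := by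
  split_ifs <;> simp

/-- `n = 0` is allowed: then `b = 0`, and `b / n = 0`. -/
theorem abs_div_sub_div_le {a b m n D : ℝ} (hm : 0 < m) (hb : 0 ≤ b) (hbn : b ≤ n)
    (hab : |a - b| ≤ D) (hmn : |m - n| ≤ D) : |a / m - b / n| ≤ 2 * (D / m) := by
  have hn : 0 ≤ n := hb.trans hbn
  set r := b / n
  have hr : r ∈ Icc (0 : ℝ) 1 := ⟨div_nonneg hb hn, div_le_one_of_le₀ hbn hn⟩
  have hbr : b = r * n := by
    rcases hn.eq_or_lt with hn0 | hn0
    · subst hn0; simp [r, le_antisymm hbn hb]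
    · exact (div_mul_cancel₀ b hn0.ne').symm
  have key : a / m - r = ((a - b) + r * (n - m)) / m := by
    rw [hbr]; field_simp; ring
  rw [key, abs_div, abs_of_pos hm, ← mul_div_assoc, two_mul]
  gcongr
  calc |a - b + r * (n - m)| ≤ |a - b| + r * |m - n| := by
        rw [abs_sub_comm m, ← abs_of_nonneg hr.1, ← abs_mul, abs_of_nonneg hr.1]
        exact abs_add_le _ _
    _ ≤ D + 1 * D := by gcongr; exact hr.2
    _ = D + D := by ring

theorem abs_sub_le_of_minimizer {a₁ a₀ D₁ D₀ E₁ E₀ θ₀ θ₁ : ℝ} {b₁ b₀ e₁ e₀ : ℝ → ℝ}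
    (ha₁ : |a₁ - b₁ θ₀| ≤ 2 * D₁) (ha₀ : |a₀ - b₀ θ₀| ≤ 2 * D₀)
    (hb₁ : ∀ θ, |b₁ θ - e₁ θ| ≤ 2 * E₁) (hb₀ : ∀ θ, |b₀ θ - e₀ θ| ≤ 2 * E₀)
    (hmin : |e₁ θ₀ - e₀ θ₀| ≤ |e₁ θ₁ - e₀ θ₁|) (hbal : b₁ θ₁ = b₀ θ₁) :
    |a₁ - a₀| ≤ 2 * (D₁ + D₀) + 4 * (E₁ + E₀) := by
  have hθ₁ : |e₁ θ₁ - e₀ θ₁| ≤ |b₁ θ₁ - e₁ θ₁| + |b₀ θ₁ - e₀ θ₁| := by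
    rw [abs_sub_comm (b₁ θ₁), hbal]
    exact abs_sub_le _ _ _
  have hθ₀ : |a₁ - a₀| ≤ |a₁ - b₁ θ₀| + |b₁ θ₀ - e₁ θ₀| + |e₁ θ₀ - e₀ θ₀|
      + |b₀ θ₀ - e₀ θ₀| + |a₀ - b₀ θ₀| := by
    rw [abs_sub_comm (b₀ θ₀), abs_sub_comm a₀]
    linarith [abs_sub_le a₁ (b₁ θ₀) a₀, abs_sub_le (b₁ θ₀) (e₁ θ₀) a₀,
      abs_sub_le (e₁ θ₀) (e₀ θ₀) a₀, abs_sub_le (e₀ θ₀) (b₀ θ₀) a₀]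
  linarith [hb₁ θ₀, hb₀ θ₀, hb₁ θ₁, hb₀ θ₁]

theorem continuousAt_mul_ite_one_le {a c : ℝ} (h : a * c ≠ 1) :
    ContinuousAt (fun c => a * if 1 ≤ a * c then (1 : ℝ) else 0) c := by
  have ha : ContinuousAt (fun c => a * c) c := (continuous_const_mul a).continuousAt
  rcases h.lt_or_gt with h | h
  · refine (continuousAt_const : ContinuousAt (fun _ => (0 : ℝ)) c).congr ?_
    filter_upwards [ha.eventually_lt continuousAt_const h] with c' hc'
    simp [not_le.2 hc']
  · refine (continuousAt_const : ContinuousAt (fun _ => a) c).congr ?_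
    filter_upwards [continuousAt_const.eventually_lt ha h] with c' hc'
    simp [hc'.le]

section ThresholdRules

variable {α β : Type*} [MeasurableSpace α] [MeasurableSpace β] {μ : Measure α} {ν : Measure β}
  {q : α → ℝ} {p : β → ℝ}

theorem integrable_of_mem_Icc [IsFiniteMeasure μ] (hq : Measurable q)
    (hq01 : ∀ x, q x ∈ Icc (0 : ℝ) 1) : Integrable q μ :=
  .of_bound hq.aestronglyMeasurable 1 <| ae_of_all _ fun x => abs_le_one_of_mem_Icc (hq01 x)

theorem integral_mul_mem_Icc_integral {g i : α → ℝ} (hg : Integrable g μ) (hg0 : ∀ x, 0 ≤ g x)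
    (hi : Measurable i) (hi01 : ∀ x, i x ∈ Icc (0 : ℝ) 1) :
    ∫ x, g x * i x ∂μ ∈ Icc 0 (∫ x, g x ∂μ) :=
  ⟨integral_nonneg fun x => mul_nonneg (hg0 x) (hi01 x).1,
    integral_mono (hg.mul_bdd hi.aestronglyMeasurable (c := 1) <|
      ae_of_all _ fun x => abs_le_one_of_mem_Icc (hi01 x)) hg
      fun x => mul_le_of_le_one_right (hg0 x) (hi01 x).2⟩

theorem abs_integral_mul_div_sub_le {f g i : α → ℝ} (hf : Integrable f μ) (hg : Integrable g μ)
    (hg0 : ∀ x, 0 ≤ g x) (hi : Measurable i) (hi01 : ∀ x, i x ∈ Icc (0 : ℝ) 1)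
    (hm : 0 < ∫ x, f x ∂μ) :
    |(∫ x, f x * i x ∂μ) / (∫ x, f x ∂μ) - (∫ x, g x * i x ∂μ) / (∫ x, g x ∂μ)|
      ≤ 2 * ((∫ x, |f x - g x| ∂μ) / ∫ x, f x ∂μ) := by
  have hmul : ∀ h : α → ℝ, Integrable h μ → Integrable (fun x => h x * i x) μ := fun h hh =>
    hh.mul_bdd hi.aestronglyMeasurable (c := 1) <| ae_of_all _ fun x =>
      abs_le_one_of_mem_Icc (hi01 x)
  have hgi := integral_mul_mem_Icc_integral hg hg0 hi hi01
  refine abs_div_sub_div_le hm hgi.1 hgi.2 ?_ ?_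
  · rw [← integral_sub (hmul f hf) (hmul g hg)]
    refine abs_integral_le_integral_abs.trans <|
      integral_mono ((hmul f hf).sub (hmul g hg)).abs (hf.sub hg).abs fun x => ?_
    simp only [← sub_mul, abs_mul]
    exact mul_le_of_le_one_right (abs_nonneg _) (abs_le_one_of_mem_Icc (hi01 x))
  · rw [← integral_sub hf hg]
    exact abs_integral_le_integral_abs

noncomputable def tailMass (μ : Measure α) (q : α → ℝ) (t : ℝ) : ℝ :=
  ∫ x, q x * (if t ≤ q x then 1 else 0) ∂μ

/-- The `q`-mass accepted by the rule `1 ≤ q c`; for `ĝ_θ(·, 1)` and `ĝ_θ(·, 0)` the factor `c` is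
`2 - θ / p̂₁` and `2 + θ / p̂₀`. -/
noncomputable def thresholdMass (μ : Measure α) (q : α → ℝ) (c : ℝ) : ℝ :=
  ∫ x, q x * (if 1 ≤ q x * c then 1 else 0) ∂μ

noncomputable def thresholdRatio (μ : Measure α) (q : α → ℝ) (c : ℝ) : ℝ :=
  thresholdMass μ q c / ∫ x, q x ∂μ

noncomputable def tailGap (μ : Measure α) (ν : Measure β) (q : α → ℝ) (p : β → ℝ) : ℝ :=
  ⨆ t ∈ Icc (0 : ℝ) 1, |tailMass μ q t - tailMass ν p t|

theorem measurable_ite_le_one_zero {f g : α → ℝ} (hf : Measurable f) (hg : Measurable g) :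
    Measurable fun x => if f x ≤ g x then (1 : ℝ) else 0 :=
  Measurable.ite (measurableSet_le hf hg) measurable_const measurable_const

theorem tailMass_mem_Icc [IsFiniteMeasure μ] (hq : Measurable q) (hq01 : ∀ x, q x ∈ Icc (0 : ℝ) 1)
    (t : ℝ) : tailMass μ q t ∈ Icc 0 (∫ x, q x ∂μ) :=
  integral_mul_mem_Icc_integral (integrable_of_mem_Icc hq hq01) (fun x => (hq01 x).1)
    (measurable_ite_le_one_zero measurable_const hq) fun _ => ite_one_zero_mem_Icc _

theorem tailMass_zero (hq0 : ∀ x, 0 ≤ q x) : tailMass μ q 0 = ∫ x, q x ∂μ := by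
  simp [tailMass, hq0]

theorem thresholdMass_of_one_le {c : ℝ} (hc : 1 ≤ c) :
    thresholdMass μ q c = tailMass μ q c⁻¹ := by
  simp only [thresholdMass, tailMass, inv_le_iff_one_le_mul₀ (zero_lt_one.trans_le hc)]

theorem thresholdMass_of_lt_one (hq01 : ∀ x, q x ∈ Icc (0 : ℝ) 1) {c : ℝ} (hc : c < 1) :
    thresholdMass μ q c = 0 := by
  have h : ∀ x, q x * c < 1 := fun x => by
    rcases le_or_gt c 0 with hc0 | hc0
    · nlinarith [(hq01 x).1]
    · nlinarith [(hq01 x).2]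
  simp [thresholdMass, fun x => not_le.2 (h x)]

theorem thresholdRatio_nonneg (hq0 : ∀ x, 0 ≤ q x) (c : ℝ) : 0 ≤ thresholdRatio μ q c :=
  div_nonneg (integral_nonneg fun x => mul_nonneg (hq0 x) (ite_one_zero_mem_Icc _).1)
    (integral_nonneg hq0)

theorem abs_integral_mul_ite_div_sub_thresholdRatio_le [IsFiniteMeasure μ] {f : α → ℝ}
    (hf : Measurable f) (hf01 : ∀ x, f x ∈ Icc (0 : ℝ) 1) (hq : Measurable q)
    (hq01 : ∀ x, q x ∈ Icc (0 : ℝ) 1) (hm : 0 < ∫ x, f x ∂μ) (c : ℝ) :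
    |(∫ x, f x * (if 1 ≤ q x * c then 1 else 0) ∂μ) / (∫ x, f x ∂μ) - thresholdRatio μ q c|
      ≤ 2 * ((∫ x, |f x - q x| ∂μ) / ∫ x, f x ∂μ) :=
  abs_integral_mul_div_sub_le (integrable_of_mem_Icc hf hf01) (integrable_of_mem_Icc hq hq01)
    (fun x => (hq01 x).1) (measurable_ite_le_one_zero measurable_const (hq.mul_const c))
    (fun _ => ite_one_zero_mem_Icc _) hm

theorem continuous_thresholdMass [IsFiniteMeasure μ] (hq : Measurable q)
    (hq01 : ∀ x, q x ∈ Icc (0 : ℝ) 1) (hatom : ∀ t ∈ Ioc (0 : ℝ) 1, μ {x | q x = t} = 0) :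
    Continuous (thresholdMass μ q) := by
  refine continuous_iff_continuousAt.2 fun c => continuousAt_of_dominated (bound := fun _ => 1)
    (Eventually.of_forall fun c' =>
      (hq.mul (measurable_ite_le_one_zero measurable_const (hq.mul_const c'))).aestronglyMeasurable)
    (Eventually.of_forall fun c' => ae_of_all _ fun x =>
      abs_le_one_of_mem_Icc (unitInterval.mul_mem (hq01 x) (ite_one_zero_mem_Icc _)))
    (integrable_const 1) ?_
  have hnull : μ {x | q x * c = 1} = 0 := by
    by_cases hc : c⁻¹ ∈ Ioc (0 : ℝ) 1
    · exact measure_mono_null (fun x hx => eq_inv_of_mul_eq_one_left hx) (hatom _ hc)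
    · refine measure_mono_null (fun x (hx : q x * c = 1) => hc ?_) measure_empty
      rw [← eq_inv_of_mul_eq_one_left hx]
      exact ⟨(hq01 x).1.lt_of_ne (by rintro h; simp [← h] at hx), (hq01 x).2⟩
  have hae : ∀ᵐ x ∂μ, q x * c ≠ 1 := ae_iff.2 (by simpa using hnull)
  filter_upwards [hae] with x hx
  exact continuousAt_mul_ite_one_le hx

theorem abs_tailMass_sub_le_tailGap [IsFiniteMeasure μ] [IsFiniteMeasure ν] (hq : Measurable q)
    (hq01 : ∀ x, q x ∈ Icc (0 : ℝ) 1) (hp : Measurable p) (hp01 : ∀ x, p x ∈ Icc (0 : ℝ) 1)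
    {t : ℝ} (ht : t ∈ Icc (0 : ℝ) 1) :
    |tailMass μ q t - tailMass ν p t| ≤ tailGap μ ν q p := by
  have hbdd : ∀ t, |tailMass μ q t - tailMass ν p t| ≤ (∫ x, q x ∂μ) + ∫ x, p x ∂ν := fun t => by
    have hqt := tailMass_mem_Icc (μ := μ) hq hq01 t
    have hpt := tailMass_mem_Icc (μ := ν) hp hp01 t
    rw [abs_le]; constructor <;> linarith [hqt.1, hqt.2, hpt.1, hpt.2]
  refine le_ciSup₂ (f := fun t (_ : t ∈ Icc (0 : ℝ) 1) => |tailMass μ q t - tailMass ν p t|)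
    ⟨(∫ x, q x ∂μ) + ∫ x, p x ∂ν, ?_⟩ t ht
  simp only [upperBounds, mem_iUnion, mem_range]
  rintro _ ⟨t, _, rfl⟩
  exact hbdd t

theorem abs_thresholdRatio_sub_le [IsFiniteMeasure μ] [IsFiniteMeasure ν] (hq : Measurable q)
    (hq01 : ∀ x, q x ∈ Icc (0 : ℝ) 1) (hp : Measurable p) (hp01 : ∀ x, p x ∈ Icc (0 : ℝ) 1)
    (hm : 0 < ∫ x, q x ∂μ) (c : ℝ) :
    |thresholdRatio μ q c - thresholdRatio ν p c| ≤ 2 * (tailGap μ ν q p / ∫ x, q x ∂μ) := by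
  have hgap {t : ℝ} (ht : t ∈ Icc (0 : ℝ) 1) :=
    abs_tailMass_sub_le_tailGap (μ := μ) (ν := ν) hq hq01 hp hp01 ht
  have hgap₀ := hgap ⟨le_rfl, zero_le_one⟩
  rcases lt_or_ge c 1 with hc | hc
  · simp only [thresholdRatio, thresholdMass_of_lt_one hq01 hc, thresholdMass_of_lt_one hp01 hc,
      zero_div, sub_zero, abs_zero]
    exact mul_nonneg zero_le_two (div_nonneg ((abs_nonneg _).trans hgap₀) hm.le)
  · have hc' : c⁻¹ ∈ Icc (0 : ℝ) 1 := ⟨inv_nonneg.2 (by linarith), inv_le_one_of_one_le₀ hc⟩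
    rw [tailMass_zero fun x => (hq01 x).1, tailMass_zero fun x => (hp01 x).1] at hgap₀
    rw [thresholdRatio, thresholdRatio, thresholdMass_of_one_le hc, thresholdMass_of_one_le hc]
    exact abs_div_sub_div_le hm (tailMass_mem_Icc hp hp01 _).1 (tailMass_mem_Icc hp hp01 _).2
      (hgap hc') hgap₀

theorem exists_thresholdRatio_eq [IsFiniteMeasure μ] [IsFiniteMeasure ν] (hq : Measurable q)
    (hq01 : ∀ x, q x ∈ Icc (0 : ℝ) 1) (hqatom : ∀ t ∈ Ioc (0 : ℝ) 1, μ {x | q x = t} = 0)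
    (hp : Measurable p) (hp01 : ∀ x, p x ∈ Icc (0 : ℝ) 1)
    (hpatom : ∀ t ∈ Ioc (0 : ℝ) 1, ν {x | p x = t} = 0) {c₁ c₀ : ℝ → ℝ} (hc₁ : Continuous c₁)
    (hc₀ : Continuous c₀) {a b : ℝ} (ha : c₁ a < 1) (hb : c₀ b < 1) :
    ∃ θ, thresholdRatio μ q (c₁ θ) = thresholdRatio ν p (c₀ θ) := by
  refine intermediate_value_univ₂ (a := a) (b := b)
    (((continuous_thresholdMass hq hq01 hqatom).comp hc₁).div_const _)
    (((continuous_thresholdMass hp hp01 hpatom).comp hc₀).div_const _) ?_ ?_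
  · simpa [thresholdRatio, thresholdMass_of_lt_one hq01 ha] using
      thresholdRatio_nonneg (μ := ν) (fun x => (hp01 x).1) (c₀ a)
  · simpa [thresholdRatio, thresholdMass_of_lt_one hp01 hb] using
      thresholdRatio_nonneg (μ := μ) (fun x => (hq01 x).1) (c₁ b)

end ThresholdRules

section ConditionalProbability

variable {Ω E : Type*} [MeasurableSpace Ω] [MeasurableSpace E] {P : Measure Ω}
  {X : Ω → E} {S Y : Ω → Bool} {η : E → Bool → ℝ}

def IsRegressionFunction (P : Measure Ω) (X : Ω → E) (S Y : Ω → Bool) (η : E → Bool → ℝ) : Prop :=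
  ∀ φ : E × Bool → ℝ, Measurable φ → (∃ C, ∀ z, |φ z| ≤ C) →
    ∫ ω, (if Y ω then (1 : ℝ) else 0) * φ (X ω, S ω) ∂P = ∫ ω, η (X ω) (S ω) * φ (X ω, S ω) ∂P

theorem measureReal_inter_eq_setIntegral (hX : Measurable X) (hS : Measurable S)
    (hY : Measurable Y) (hreg : IsRegressionFunction P X S Y η) (s : Bool) {g : E → Bool}
    (hg : MeasurableSet {x | g x = true}) :
    P.real ({ω | S ω = s ∧ Y ω = true} ∩ {ω | g (X ω) = true})
      = ∫ ω in {ω | S ω = s}, η (X ω) s * (if g (X ω) then 1 else 0) ∂P := by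
  have hSs : MeasurableSet {ω | S ω = s} := hS (measurableSet_singleton s)
  have hA : MeasurableSet ({ω | S ω = s ∧ Y ω = true} ∩ {ω | g (X ω) = true}) :=
    (hSs.inter (hY (measurableSet_singleton true))).inter (hX hg)
  have hφ : Measurable fun z : E × Bool => if z.2 = s ∧ g z.1 = true then (1 : ℝ) else 0 :=
    Measurable.ite ((measurable_snd (measurableSet_singleton s)).inter (measurable_fst hg))
      measurable_const measurable_const
  rw [← integral_indicator_one hA, ← integral_indicator hSs]
  refine (integral_congr_ae (ae_of_all _ fun ω => ?_)).trans
    ((hreg _ hφ ⟨1, fun z => by split_ifs <;> norm_num⟩).trans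
      (integral_congr_ae (ae_of_all _ fun ω => ?_))) <;>
    by_cases hs : S ω = s <;> cases hy : Y ω <;> cases hgx : g (X ω) <;>
    simp [indicator, hs, hy, hgx]

theorem cond_toReal_eq_integral_div [IsFiniteMeasure P] (hX : Measurable X) (hS : Measurable S)
    (hY : Measurable Y) (hreg : IsRegressionFunction P X S Y η) {s : Bool}
    (hPs : P {ω | S ω = s} ≠ 0) {g : E → Bool → Bool}
    (hg : MeasurableSet {x | g x s = true}) :
    (cond P {ω | S ω = s ∧ Y ω = true} {ω | g (X ω) (S ω) = true}).toReal
      = (∫ ω, η (X ω) s * (if g (X ω) s then 1 else 0) ∂(cond P {ω | S ω = s}))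
        / ∫ ω, η (X ω) s ∂(cond P {ω | S ω = s}) := by
  have hA : MeasurableSet {ω | S ω = s ∧ Y ω = true} :=
    (hS (measurableSet_singleton s)).inter (hY (measurableSet_singleton true))
  have hevent : {ω | S ω = s ∧ Y ω = true} ∩ {ω | g (X ω) (S ω) = true}
      = {ω | S ω = s ∧ Y ω = true} ∩ {ω | g (X ω) s = true} := by
    ext ω; simp +contextual
  have hden : {ω | S ω = s ∧ Y ω = true}
      = {ω | S ω = s ∧ Y ω = true} ∩ {ω | (fun _ => true) (X ω) = true} := by simp
  have hc : (P {ω | S ω = s}).toReal⁻¹ ≠ 0 :=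
    inv_ne_zero (ENNReal.toReal_ne_zero.2 ⟨hPs, measure_ne_top _ _⟩)
  rw [cond_apply hA, ENNReal.toReal_mul, ENNReal.toReal_inv, ← measureReal_def,
    ← measureReal_def, inv_mul_eq_div, hevent, measureReal_inter_eq_setIntegral hX hS hY hreg s hg,
    hden, measureReal_inter_eq_setIntegral hX hS hY hreg s (g := fun _ => true) (by simp),
    ProbabilityTheory.cond,
    integral_smul_measure, integral_smul_measure, ENNReal.toReal_inv, smul_eq_mul, smul_eq_mul,
    mul_div_mul_left _ _ hc]
  simp

theorem measure_setOf_eq_ne_zero [IsProbabilityMeasure P] (hS : Measurable S)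
    (hSnd : 0 < P {ω | S ω = true} ∧ P {ω | S ω = true} < 1) (s : Bool) :
    P {ω | S ω = s} ≠ 0 := by
  have hcompl : {ω | S ω = false} = {ω | S ω = true}ᶜ := by ext ω; simp
  cases s
  · have hS1 : MeasurableSet {ω | S ω = true} := hS (measurableSet_singleton true)
    rw [hcompl, prob_compl_eq_one_sub hS1]
    exact (tsub_pos_of_lt hSnd.2).ne'
  · exact hSnd.1.ne'

end ConditionalProbability

theorem stmt_14_general {d : ℕ} {Ω : Type*} [MeasurableSpace Ω]
    (P : Measure Ω) [IsProbabilityMeasure P]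
    (X : Ω → (Fin d → ℝ)) (S Y : Ω → Bool)
    (hX : Measurable X) (hS : Measurable S) (hY : Measurable Y)
    (hSnd : 0 < P {ω | S ω = true} ∧ P {ω | S ω = true} < 1)
    (η : (Fin d → ℝ) → Bool → ℝ)
    (hηm : Measurable (fun p : (Fin d → ℝ) × Bool => η p.1 p.2))
    (hη01 : ∀ x s, η x s ∈ Icc (0:ℝ) 1)
    (hreg : ∀ φ : (Fin d → ℝ) × Bool → ℝ, Measurable φ → (∃ C, ∀ z, |φ z| ≤ C) →
      ∫ ω, (if Y ω then (1:ℝ) else 0) * φ (X ω, S ω) ∂P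
        = ∫ ω, η (X ω) (S ω) * φ (X ω, S ω) ∂P)
    (m1 m0 : ℝ)
    (hm1 : m1 = ∫ ω, η (X ω) true ∂(ProbabilityTheory.cond P {ω | S ω = true}))
    (hm0 : m0 = ∫ ω, η (X ω) false ∂(ProbabilityTheory.cond P {ω | S ω = false}))
    (hm1pos : 0 < m1) (hm0pos : 0 < m0)
    -- the estimator
    (ηh : (Fin d → ℝ) → Bool → ℝ)
    (hηhm : Measurable (fun p : (Fin d → ℝ) × Bool => ηh p.1 p.2))
    (hηh01 : ∀ x s, ηh x s ∈ Icc (0:ℝ) 1)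
    (mh1 mh0 : ℝ)
    (hmh1 : mh1 = ∫ ω, ηh (X ω) true ∂(ProbabilityTheory.cond P {ω | S ω = true}))
    (hmh0 : mh0 = ∫ ω, ηh (X ω) false ∂(ProbabilityTheory.cond P {ω | S ω = false}))
    (hmh1pos : 0 < mh1) (hmh0pos : 0 < mh0)
    (hatom : ∀ s : Bool, ∀ t ∈ Ioc (0:ℝ) 1,
      ProbabilityTheory.cond P {ω | S ω = s} {ω | ηh (X ω) s = t} = 0)
    -- the auxiliary (empirical) measures
    (ν1 ν0 : Measure (Fin d → ℝ))
    [IsProbabilityMeasure ν1] [IsProbabilityMeasure ν0]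
    (ph1 ph0 : ℝ) (hph1 : 0 < ph1) (hph0 : 0 < ph0)
    -- the family of plug-in classifiers
    (G : ℝ → (Fin d → ℝ) → Bool → Bool)
    (hGdef : ∀ θ x, (G θ x true = true ↔ 1 ≤ ηh x true * (2 - θ / ph1))
        ∧ (G θ x false = true ↔ 1 ≤ ηh x false * (2 + θ / ph0)))
    (Δ : ℝ → ℝ)
    (hΔ : ∀ θ, Δ θ =
      |(∫ x, ηh x true * (if G θ x true then (1:ℝ) else 0) ∂ν1) / (∫ x, ηh x true ∂ν1)
        - (∫ x, ηh x false * (if G θ x false then (1:ℝ) else 0) ∂ν0)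
            / (∫ x, ηh x false ∂ν0)|)
    (θh : ℝ) (hθh : ∀ θ : ℝ, Δ θh ≤ Δ θ) :
    |(ProbabilityTheory.cond P {ω | S ω = true ∧ Y ω = true}
        {ω | G θh (X ω) (S ω) = true}).toReal
      - (ProbabilityTheory.cond P {ω | S ω = false ∧ Y ω = true}
          {ω | G θh (X ω) (S ω) = true}).toReal|
      ≤ 2 * ((∫ ω, |η (X ω) true - ηh (X ω) true|
              ∂(ProbabilityTheory.cond P {ω | S ω = true})) / m1
            + (∫ ω, |η (X ω) false - ηh (X ω) false|
              ∂(ProbabilityTheory.cond P {ω | S ω = false})) / m0)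
        + 4 * ((⨆ t ∈ Icc (0:ℝ) 1,
              |(∫ ω, ηh (X ω) true * (if t ≤ ηh (X ω) true then (1:ℝ) else 0)
                  ∂(ProbabilityTheory.cond P {ω | S ω = true}))
                - (∫ x, ηh x true * (if t ≤ ηh x true then (1:ℝ) else 0) ∂ν1)|) / mh1
            + (⨆ t ∈ Icc (0:ℝ) 1,
              |(∫ ω, ηh (X ω) false * (if t ≤ ηh (X ω) false then (1:ℝ) else 0)
                  ∂(ProbabilityTheory.cond P {ω | S ω = false}))
                - (∫ x, ηh x false * (if t ≤ ηh x false then (1:ℝ) else 0) ∂ν0)|) / mh0) := by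
  have hηh : ∀ s, Measurable fun x => ηh x s := fun s =>
    hηhm.comp (measurable_id.prodMk measurable_const)
  have hq : ∀ s, Measurable fun ω => ηh (X ω) s := fun s => (hηh s).comp hX
  have hf : ∀ s, Measurable fun ω => η (X ω) s := fun s =>
    (hηm.comp (measurable_id.prodMk measurable_const)).comp hX
  have hGm : ∀ s, MeasurableSet {x | G θh x s = true} := by
    rintro (_ | _) <;> simp only [hGdef] <;>
      exact measurableSet_le measurable_const ((hηh _).mul_const _)
  rw [cond_toReal_eq_integral_div hX hS hY hreg (measure_setOf_eq_ne_zero hS hSnd true) (hGm true),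
    cond_toReal_eq_integral_div hX hS hY hreg (measure_setOf_eq_ne_zero hS hSnd false) (hGm false)]
  subst hm1 hm0 hmh1 hmh0
  simp only [hGdef] at hΔ ⊢
  obtain ⟨θs, hθs⟩ := exists_thresholdRatio_eq (hq true) (fun _ => hηh01 _ _) (hatom true)
    (hq false) (fun _ => hηh01 _ _) (hatom false) (c₁ := fun θ => 2 - θ / ph1)
    (c₀ := fun θ => 2 + θ / ph0) (by fun_prop) (by fun_prop) (a := 2 * ph1) (b := -(2 * ph0))
    (by field_simp; norm_num) (by field_simp; norm_num)
  exact abs_sub_le_of_minimizer (θ₀ := θh) (θ₁ := θs)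
    (b₁ := fun θ => thresholdRatio _ _ (2 - θ / ph1))
    (b₀ := fun θ => thresholdRatio _ _ (2 + θ / ph0))
    (e₁ := fun θ => thresholdRatio ν1 _ (2 - θ / ph1))
    (e₀ := fun θ => thresholdRatio ν0 _ (2 + θ / ph0))
    (abs_integral_mul_ite_div_sub_thresholdRatio_le (hf true) (fun _ => hη01 _ _) (hq true)
      (fun _ => hηh01 _ _) hm1pos _)
    (abs_integral_mul_ite_div_sub_thresholdRatio_le (hf false) (fun _ => hη01 _ _) (hq false)
      (fun _ => hηh01 _ _) hm0pos _)
    (fun _ => abs_thresholdRatio_sub_le (hq true) (fun _ => hηh01 _ _) (hηh true)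
      (fun _ => hηh01 _ _) hmh1pos _)
    (fun _ => abs_thresholdRatio_sub_le (hq false) (fun _ => hηh01 _ _) (hηh false)
      (fun _ => hηh01 _ _) hmh0pos _)
    ((hΔ θh).symm.trans_le ((hθh θs).trans_eq (hΔ θs))) hθs

theorem stmt_14 {d : ℕ} {Ω : Type*} [MeasurableSpace Ω]
    (P : Measure Ω) [IsProbabilityMeasure P]
    (X : Ω → (Fin d → ℝ)) (S Y : Ω → Bool)
    (hX : Measurable X) (hS : Measurable S) (hY : Measurable Y)
    (hSnd : 0 < P {ω | S ω = true} ∧ P {ω | S ω = true} < 1)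
    (hYS : ∀ s : Bool, 0 < P {ω | Y ω = true ∧ S ω = s})
    (η : (Fin d → ℝ) → Bool → ℝ)
    (hηm : Measurable (fun p : (Fin d → ℝ) × Bool => η p.1 p.2))
    (hη01 : ∀ x s, η x s ∈ Icc (0:ℝ) 1)
    (hreg : ∀ φ : (Fin d → ℝ) × Bool → ℝ, Measurable φ → (∃ C, ∀ z, |φ z| ≤ C) →
      ∫ ω, (if Y ω then (1:ℝ) else 0) * φ (X ω, S ω) ∂P
        = ∫ ω, η (X ω) (S ω) * φ (X ω, S ω) ∂P)
    (m1 m0 : ℝ)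
    (hm1 : m1 = ∫ ω, η (X ω) true ∂(ProbabilityTheory.cond P {ω | S ω = true}))
    (hm0 : m0 = ∫ ω, η (X ω) false ∂(ProbabilityTheory.cond P {ω | S ω = false}))
    (hm1pos : 0 < m1) (hm0pos : 0 < m0)
    -- the estimator
    (ηh : (Fin d → ℝ) → Bool → ℝ)
    (hηhm : Measurable (fun p : (Fin d → ℝ) × Bool => ηh p.1 p.2))
    (hηh01 : ∀ x s, ηh x s ∈ Icc (0:ℝ) 1)
    (mh1 mh0 : ℝ)
    (hmh1 : mh1 = ∫ ω, ηh (X ω) true ∂(ProbabilityTheory.cond P {ω | S ω = true}))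
    (hmh0 : mh0 = ∫ ω, ηh (X ω) false ∂(ProbabilityTheory.cond P {ω | S ω = false}))
    (hmh1pos : 0 < mh1) (hmh0pos : 0 < mh0)
    (hatom : ∀ s : Bool, ∀ t ∈ Ioc (0:ℝ) 1,
      ProbabilityTheory.cond P {ω | S ω = s} {ω | ηh (X ω) s = t} = 0)
    -- the auxiliary (empirical) measures
    (ν1 ν0 : Measure (Fin d → ℝ))
    [IsProbabilityMeasure ν1] [IsProbabilityMeasure ν0]
    (hν1pos : 0 < ∫ x, ηh x true ∂ν1) (hν0pos : 0 < ∫ x, ηh x false ∂ν0)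
    (ph1 ph0 : ℝ) (hph1 : 0 < ph1) (hph0 : 0 < ph0)
    -- the family of plug-in classifiers
    (G : ℝ → (Fin d → ℝ) → Bool → Bool)
    (hGdef : ∀ θ x, (G θ x true = true ↔ 1 ≤ ηh x true * (2 - θ / ph1))
        ∧ (G θ x false = true ↔ 1 ≤ ηh x false * (2 + θ / ph0)))
    (Δ : ℝ → ℝ)
    (hΔ : ∀ θ, Δ θ =
      |(∫ x, ηh x true * (if G θ x true then (1:ℝ) else 0) ∂ν1) / (∫ x, ηh x true ∂ν1)
        - (∫ x, ηh x false * (if G θ x false then (1:ℝ) else 0) ∂ν0)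
            / (∫ x, ηh x false ∂ν0)|)
    (θh : ℝ) (hθh : ∀ θ : ℝ, Δ θh ≤ Δ θ) :
    |(ProbabilityTheory.cond P {ω | S ω = true ∧ Y ω = true}
        {ω | G θh (X ω) (S ω) = true}).toReal
      - (ProbabilityTheory.cond P {ω | S ω = false ∧ Y ω = true}
          {ω | G θh (X ω) (S ω) = true}).toReal|
      ≤ 2 * ((∫ ω, |η (X ω) true - ηh (X ω) true|
              ∂(ProbabilityTheory.cond P {ω | S ω = true})) / m1
            + (∫ ω, |η (X ω) false - ηh (X ω) false|
              ∂(ProbabilityTheory.cond P {ω | S ω = false})) / m0)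
        + 4 * ((⨆ t ∈ Icc (0:ℝ) 1,
              |(∫ ω, ηh (X ω) true * (if t ≤ ηh (X ω) true then (1:ℝ) else 0)
                  ∂(ProbabilityTheory.cond P {ω | S ω = true}))
                - (∫ x, ηh x true * (if t ≤ ηh x true then (1:ℝ) else 0) ∂ν1)|) / mh1
            + (⨆ t ∈ Icc (0:ℝ) 1,
              |(∫ ω, ηh (X ω) false * (if t ≤ ηh (X ω) false then (1:ℝ) else 0)
                  ∂(ProbabilityTheory.cond P {ω | S ω = false}))
                - (∫ x, ηh x false * (if t ≤ ηh x false then (1:ℝ) else 0) ∂ν0)|) / mh0) :=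
  stmt_14_general P X S Y hX hS hY hSnd η hηm hη01 hreg m1 m0 hm1 hm0 hm1pos hm0pos ηh hηhm hηh01
    mh1 mh0 hmh1 hmh0 hmh1pos hmh0pos hatom ν1 ν0 ph1 ph0 hph1 hph0 G hGdef Δ hΔ θh hθh
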